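/- Let f, g be measurable functions from a σ-finite measure space Ω into F^n. Then the following are equivalent: (i) g(x) ∈ K(f)(x) for a.e. x; (ii) |g(x)·u| ≤ |f(x)·u| for a.e. x, for every u ∈ F^n; (iii) g = h·f for some measurable scalar function h with |h| ≤ 1 a.e. -/

import Mathlib

/-!
Pointwise, if `‖⟪w, u⟫‖ ≤ ‖⟪v, u⟫‖` for all `u`, then `w` is orthogonal to `vᗮ`, so it lies in
`vᗮᗮ = 𝕜 ∙ v`, and testing against `u = v` bounds the coefficient by `1`. The a.e. version
follows because the inequality need only be checked on a countable dense set of `u`, and a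
measurable coefficient is given explicitly by `⟪f, g⟫ / ‖f‖²` (which is `0` where `f = 0`).
-/

open MeasureTheory

section InnerProductSpace

variable {𝕜 E : Type*} [RCLike 𝕜] [NormedAddCommGroup E] [InnerProductSpace 𝕜 E]

theorem mem_span_singleton_of_forall_inner_eq_zero {v w : E}
    (h : ∀ u : E, inner 𝕜 v u = 0 → inner 𝕜 w u = 0) : w ∈ 𝕜 ∙ v := by
  rw [← Submodule.orthogonal_orthogonal (𝕜 ∙ v), Submodule.mem_orthogonal']
  intro u hu
  exact h u (Submodule.mem_orthogonal_singleton_iff_inner_right.mp hu)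

theorem norm_inner_smul_left_le {c : 𝕜} (hc : ‖c‖ ≤ 1) (v u : E) :
    ‖inner 𝕜 (c • v) u‖ ≤ ‖inner 𝕜 v u‖ := by
  rw [inner_smul_left, norm_mul, RCLike.norm_conj]
  exact mul_le_of_le_one_left (norm_nonneg _) hc

theorem exists_smul_of_norm_inner_le {v w : E}
    (h : ∀ u : E, ‖inner 𝕜 w u‖ ≤ ‖inner 𝕜 v u‖) : ∃ c : 𝕜, ‖c‖ ≤ 1 ∧ w = c • v := by
  have hspan : w ∈ 𝕜 ∙ v := mem_span_singleton_of_forall_inner_eq_zero fun u hu =>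
    norm_le_zero_iff.mp <| (h u).trans_eq (by simp [hu])
  obtain ⟨c, rfl⟩ := Submodule.mem_span_singleton.mp hspan
  by_cases hv : v = 0
  · exact ⟨0, by simp, by simp [hv]⟩
  refine ⟨c, ?_, rfl⟩
  have hvv : 0 < ‖inner 𝕜 v v‖ := by simp [hv]
  have hcv := h v
  rw [inner_smul_left, norm_mul, RCLike.norm_conj] at hcv
  exact (mul_le_iff_le_one_left hvv).mp hcv

theorem norm_inner_div_norm_sq_le_and_eq_smul {v w : E} {c : 𝕜} (hw : w = c • v) :
    ‖inner 𝕜 v w / (‖v‖ : 𝕜) ^ 2‖ ≤ ‖c‖ ∧ w = (inner 𝕜 v w / (‖v‖ : 𝕜) ^ 2) • v := by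
  by_cases hv : v = 0
  · simp [hv, hw]
  have hcoef : inner 𝕜 v w / (‖v‖ : 𝕜) ^ 2 = c := by
    rw [hw, inner_smul_right, inner_self_eq_norm_sq_to_K, mul_div_cancel_right₀ _ (by simpa)]
  rw [hcoef]
  exact ⟨le_rfl, hw⟩

end InnerProductSpace

theorem ae_forall_of_isClosed {Ω X : Type*} [MeasurableSpace Ω] {μ : Measure Ω}
    [TopologicalSpace X] [TopologicalSpace.SeparableSpace X] {p : Ω → X → Prop}
    (hp : ∀ x, IsClosed {u | p x u}) (h : ∀ u, ∀ᵐ x ∂μ, p x u) : ∀ᵐ x ∂μ, ∀ u, p x u := by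
  obtain ⟨s, hs, hsd⟩ := TopologicalSpace.exists_countable_dense X
  filter_upwards [(ae_ball_iff hs).2 fun u _ => h u] with x hx u
  exact (hp x).closure_subset_iff.2 hx (hsd u)

theorem stmt2_general {𝕜 : Type*} [RCLike 𝕜] {n : ℕ}
    [MeasurableSpace (EuclideanSpace 𝕜 (Fin n))] [BorelSpace (EuclideanSpace 𝕜 (Fin n))]
    {Ω : Type*} [MeasurableSpace Ω] (μ : Measure Ω)
    (f g : Ω → EuclideanSpace 𝕜 (Fin n)) (hf : Measurable f) (hg : Measurable g) :
    List.TFAE [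
      ∀ᵐ x ∂μ, ∃ c : 𝕜, ‖c‖ ≤ 1 ∧ g x = c • f x,
      ∀ u : EuclideanSpace 𝕜 (Fin n),
        ∀ᵐ x ∂μ, ‖(inner 𝕜 (g x) u : 𝕜)‖ ≤ ‖(inner 𝕜 (f x) u : 𝕜)‖,
      ∃ h : Ω → 𝕜, Measurable h ∧ (∀ᵐ x ∂μ, ‖h x‖ ≤ 1) ∧ ∀ᵐ x ∂μ, g x = h x • f x ] := by
  tfae_have 1 → 3 := by
    intro hK
    let h : Ω → 𝕜 := fun x => inner 𝕜 (f x) (g x) / (‖f x‖ : 𝕜) ^ 2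
    have hh : ∀ᵐ x ∂μ, ‖h x‖ ≤ 1 ∧ g x = h x • f x := hK.mono fun x ⟨c, hc, hx⟩ =>
      (norm_inner_div_norm_sq_le_and_eq_smul hx).imp_left hc.trans'
    exact ⟨h, (hf.inner hg).div ((RCLike.measurable_ofReal.comp hf.norm).pow_const 2),
      hh.mono fun _ => And.left, hh.mono fun _ => And.right⟩
  tfae_have 3 → 2 := by
    rintro ⟨h, -, hh, hgf⟩ u
    filter_upwards [hh, hgf] with x hx hgx
    exact hgx ▸ norm_inner_smul_left_le hx (f x) u
  tfae_have 2 → 1 := fun hu =>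
    (ae_forall_of_isClosed (fun x => isClosed_le (continuous_const.inner continuous_id).norm
      (continuous_const.inner continuous_id).norm) hu).mono fun _ => exists_smul_of_norm_inner_le
  tfae_finish

/-- Let `f, g` be measurable functions from a σ-finite measure space `Ω` into
`𝔽ⁿ`. The following are equivalent:
(i) `g x ∈ 𝒦(f)(x) = {c • f x : ‖c‖ ≤ 1}` for a.e. `x`;
(ii) for every `u ∈ 𝔽ⁿ`, `|g(x)·u| ≤ |f(x)·u|` for a.e. `x`;
(iii) `g = h • f` a.e. for some measurable scalar function `h` with `‖h‖ ≤ 1` a.e. -/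
theorem stmt2 {𝕜 : Type*} [RCLike 𝕜] {n : ℕ}
    [MeasurableSpace (EuclideanSpace 𝕜 (Fin n))] [BorelSpace (EuclideanSpace 𝕜 (Fin n))]
    {Ω : Type*} [MeasurableSpace Ω] (μ : Measure Ω) [SigmaFinite μ]
    (f g : Ω → EuclideanSpace 𝕜 (Fin n)) (hf : Measurable f) (hg : Measurable g) :
    List.TFAE [
      ∀ᵐ x ∂μ, ∃ c : 𝕜, ‖c‖ ≤ 1 ∧ g x = c • f x,
      ∀ u : EuclideanSpace 𝕜 (Fin n),
        ∀ᵐ x ∂μ, ‖(inner 𝕜 (g x) u : 𝕜)‖ ≤ ‖(inner 𝕜 (f x) u : 𝕜)‖,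
      ∃ h : Ω → 𝕜, Measurable h ∧ (∀ᵐ x ∂μ, ‖h x‖ ≤ 1) ∧ ∀ᵐ x ∂μ, g x = h x • f x ] :=
  stmt2_general μ f g hf hg
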